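/- arXiv:2402.11396 — 3 statements merged into one kernel-verified Lean document; each statement's English description precedes it below -/
import Mathlib

section
/- Let π be a probability measure on a measurable space (Ω, 𝒜) and let f : Ω → ℝ≥0 be a probability density with respect to π (i.e. ∫ f dπ = 1). Then (1/2)·‖f − 1‖_{L¹(π)} ≤ φ(‖f − 1‖_{L²(π)}), where φ(x) = x/2 for x ≤ 1 and φ(x) = x²/(1+x²) for x ≥ 1. -/
/-!
Write `g = f - 1` and `A = {g ≥ 0}`. Since `∫ g = 0`, half of `‖g‖₁` is `u = ∫_A g = ∫_{Aᶜ} (-g)`,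
and `u ≤ π(Aᶜ)` because `-g ≤ 1`. Cauchy–Schwarz on `A` and on `Aᶜ` gives
`‖g‖₂² ≥ u²/π(A) + u²/π(Aᶜ) = u² / (π(A) π(Aᶜ))`. As `π(A) + π(Aᶜ) = 1` and `π(Aᶜ) ≥ u`, this yields
`‖g‖₂² ≥ 4u²` always and `‖g‖₂² ≥ u / (1 - u)` when `u ≥ 1/2`, which covers both branches of `φ`.
-/

open MeasureTheory Set

noncomputable def phi (x : ℝ) : ℝ := if x ≤ 1 then x / 2 else x ^ 2 / (1 + x ^ 2)

lemma le_phi_sqrt {u p q t : ℝ} (huq : u ≤ q) (hpq : p + q = 1) (ht : 0 ≤ t)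
    (h : u ^ 2 ≤ p * q * t) : u ≤ phi √t := by
  obtain rfl : p = 1 - q := by linarith
  have hst : √t ^ 2 = t := Real.sq_sqrt ht
  have hquarter : (1 - q) * q ≤ 1 / 4 := by nlinarith [sq_nonneg (2 * q - 1)]
  have h2u : 2 * u ≤ √t := by
    apply abs_le_of_sq_le_sq' _ (Real.sqrt_nonneg t) |>.2
    nlinarith
  unfold phi
  split_ifs with hs
  · linarith
  · rw [hst, le_div_iff₀ (by positivity)]
    have ht1 : 1 < t := by nlinarith
    rcases le_or_gt u (1 / 2) with hu2 | hu2
    · nlinarith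
    · -- `q ↦ (1 - q) q` decreases on `[1/2, ∞)`, and `1/2 < u ≤ q`
      have hprod : (1 - q) * q ≤ (1 - u) * u := by nlinarith
      have : u ^ 2 ≤ (1 - u) * u * t := h.trans (mul_le_mul_of_nonneg_right hprod ht)
      nlinarith

section

variable {α : Type*} [MeasurableSpace α] {μ : Measure α} {g : α → ℝ}

lemma sq_integral_le_measureReal_univ_mul_integral_sq [IsFiniteMeasure μ] (hg : MemLp g 2 μ) :
    (∫ x, g x ∂μ) ^ 2 ≤ μ.real univ * ∫ x, g x ^ 2 ∂μ := by
  set m := μ.real univ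
  set I := ∫ x, g x ∂μ
  have hg1 : Integrable g μ := hg.integrable one_le_two
  have hg2 : Integrable (fun x ↦ g x ^ 2) μ := hg.integrable_sq
  have hexpand : ∫ x, (m * g x - I) ^ 2 ∂μ = m * (m * ∫ x, g x ^ 2 ∂μ - I ^ 2) := by
    have : ∀ x, (m * g x - I) ^ 2 = m ^ 2 * g x ^ 2 - 2 * m * I * g x + I ^ 2 := fun x ↦ by ring
    simp_rw [this]
    rw [integral_add, integral_sub, integral_const_mul, integral_const_mul, integral_const,
      smul_eq_mul]
    · ring
    all_goals fun_prop
  have hnonneg : 0 ≤ m * (m * ∫ x, g x ^ 2 ∂μ - I ^ 2) :=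
    hexpand ▸ integral_nonneg fun _ ↦ sq_nonneg _
  rcases measureReal_nonneg.eq_or_lt with hm | hm
  · have : μ = 0 := by
      rw [← Measure.measure_univ_eq_zero]
      exact (measureReal_eq_zero_iff).1 hm.symm
    simp [I, this]
  · nlinarith [(mul_nonneg_iff_of_pos_left hm).1 hnonneg]

lemma sq_setIntegral_le_of_integral_eq_zero [IsFiniteMeasure μ] (hg : MemLp g 2 μ)
    (h0 : ∫ x, g x ∂μ = 0) {s : Set α} (hs : MeasurableSet s) :
    μ.real univ * (∫ x in s, g x ∂μ) ^ 2 ≤ μ.real s * μ.real sᶜ * ∫ x, g x ^ 2 ∂μ := by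
  have hcompl : ∫ x in sᶜ, g x ∂μ = -∫ x in s, g x ∂μ := by
    linarith [integral_add_compl hs (hg.integrable one_le_two)]
  have hs_cs := sq_integral_le_measureReal_univ_mul_integral_sq (hg.restrict s)
  have hsc_cs := sq_integral_le_measureReal_univ_mul_integral_sq (hg.restrict sᶜ)
  rw [hcompl, neg_sq] at hsc_cs
  rw [measureReal_restrict_apply_univ] at hs_cs hsc_cs
  rw [← measureReal_add_measureReal_compl hs, ← integral_add_compl hs hg.integrable_sq]
  nlinarith [mul_le_mul_of_nonneg_left hs_cs (measureReal_nonneg (μ := μ) (s := sᶜ)),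
    mul_le_mul_of_nonneg_left hsc_cs (measureReal_nonneg (μ := μ) (s := s))]

lemma integral_abs_eq_two_mul_setIntegral_of_integral_eq_zero (hgm : Measurable g)
    (hg : Integrable g μ) (h0 : ∫ x, g x ∂μ = 0) :
    ∫ x, |g x| ∂μ = 2 * ∫ x in {x | 0 ≤ g x}, g x ∂μ := by
  have hs : MeasurableSet {x | 0 ≤ g x} := measurableSet_le measurable_const hgm
  have hpos : ∫ x in {x | 0 ≤ g x}, |g x| ∂μ = ∫ x in {x | 0 ≤ g x}, g x ∂μ :=
    setIntegral_congr_fun hs fun x hx ↦ abs_of_nonneg hx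
  have hneg : ∫ x in {x | 0 ≤ g x}ᶜ, |g x| ∂μ = -∫ x in {x | 0 ≤ g x}ᶜ, g x ∂μ := by
    rw [← integral_neg]
    exact setIntegral_congr_fun hs.compl fun x hx ↦ abs_of_neg (not_le.1 hx)
  rw [← integral_add_compl hs hg.abs, hpos, hneg]
  linarith [integral_add_compl hs hg]

end

/-- If `f` is a probability density w.r.t. a probability measure `π`, then
`(1/2)·‖f − 1‖_{L¹(π)} ≤ φ(‖f − 1‖_{L²(π)})`. -/
theorem stmt_0 {Ω : Type*} [MeasurableSpace Ω] (π : Measure Ω) [IsProbabilityMeasure π]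
    (f : Ω → ℝ) (hf_meas : Measurable f) (hf_nonneg : ∀ ω, 0 ≤ f ω)
    (hf_int : Integrable f π) (hf_one : ∫ ω, f ω ∂π = 1)
    (hf_sq : Integrable (fun ω => (f ω - 1) ^ 2) π) :
    (1 / 2) * ∫ ω, |f ω - 1| ∂π ≤ phi (Real.sqrt (∫ ω, (f ω - 1) ^ 2 ∂π)) := by
  set A := {ω | 0 ≤ f ω - 1}
  have hA : MeasurableSet A := measurableSet_le measurable_const (hf_meas.sub_const 1)
  have hg_int : Integrable (fun ω ↦ f ω - 1) π := hf_int.sub (integrable_const 1)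
  have hg_L2 : MemLp (fun ω ↦ f ω - 1) 2 π :=
    (memLp_two_iff_integrable_sq hg_int.aestronglyMeasurable).2 hf_sq
  have hg_zero : ∫ ω, (f ω - 1) ∂π = 0 := by
    simp [integral_sub hf_int (integrable_const 1), hf_one]
  have habs := integral_abs_eq_two_mul_setIntegral_of_integral_eq_zero (hf_meas.sub_const 1)
    hg_int hg_zero
  have hsq := sq_setIntegral_le_of_integral_eq_zero hg_L2 hg_zero hA
  rw [probReal_univ, one_mul] at hsq
  have hu_le : ∫ ω in A, (f ω - 1) ∂π ≤ π.real Aᶜ := by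
    have hsplit := integral_add_compl hA hg_int
    have hmono : ∫ ω in Aᶜ, -(f ω - 1) ∂π ≤ ∫ ω in Aᶜ, 1 ∂π :=
      setIntegral_mono hg_int.neg.restrict (integrable_const 1) fun ω ↦ by linarith [hf_nonneg ω]
    rw [integral_neg, setIntegral_const, smul_eq_mul, mul_one] at hmono
    linarith
  rw [habs, ← mul_assoc, one_div_mul_cancel two_ne_zero, one_mul]
  exact le_phi_sqrt hu_le (probReal_add_probReal_compl hA)
    (integral_nonneg fun ω ↦ sq_nonneg _) hsq
end

section
/- As s → 0⁺, the total variation distance between N(0,1+s) and N(0,1) satisfies ‖N(0,1+s) − N(0,1)‖_TV = s/√(2eπ) · (1 + o(1)). -/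
open MeasureTheory ProbabilityTheory Filter

/-- Total variation distance between two measures: sup over measurable sets `E`
of `|μ(E) − ν(E)|`. -/
noncomputable def tvDist {α : Type*} [MeasurableSpace α] (μ ν : Measure α) : ℝ :=
  ⨆ E : {E : Set α // MeasurableSet E}, |(μ E.1).toReal - (ν E.1).toReal|

/-! The densities of `N(0,1+s)` and `N(0,1)` cross exactly at `±c(s)`, where
`c(s) = √((1+s) log(1+s) / s)`, so by Scheffé's lemma the total variation distance is the
difference of the masses the two laws give to `(-c(s), c(s))`, namely `G(c(s)) - G(c(s)/√(1+s))`
with `G(t) = N(0,1)(-t, t)`. Both arguments tend to `1` and differ by `s/2 + o(s)`, so the distance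
is `G'(1) s/2 + o(s) = φ(1) s + o(s) = s/√(2eπ) + o(s)`. -/

open Real Set Topology
open scoped NNReal ENNReal

theorem tvDist_eq_measureReal_sub {α : Type*} [MeasurableSpace α] {μ ν : Measure α}
    [IsFiniteMeasure μ] [IsFiniteMeasure ν] {s : Set α} (huniv : μ univ = ν univ)
    (hs : MeasurableSet s) (hle : μ.restrict s ≤ ν.restrict s)
    (hge : ν.restrict sᶜ ≤ μ.restrict sᶜ) :
    tvDist μ ν = ν.real s - μ.real s := by
  have le_on (F : Set α) : μ.real (F ∩ s) ≤ ν.real (F ∩ s) := by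
    have := Measure.le_iff'.mp hle F
    rw [Measure.restrict_apply' hs, Measure.restrict_apply' hs] at this
    exact ENNReal.toReal_mono (measure_ne_top _ _) this
  have ge_on (F : Set α) : ν.real (F ∩ sᶜ) ≤ μ.real (F ∩ sᶜ) := by
    have := Measure.le_iff'.mp hge F
    rw [Measure.restrict_apply' hs.compl, Measure.restrict_apply' hs.compl] at this
    exact ENNReal.toReal_mono (measure_ne_top _ _) this
  have hmass : μ.real s + μ.real sᶜ = ν.real s + ν.real sᶜ := by
    rw [measureReal_add_measureReal_compl hs, measureReal_add_measureReal_compl hs,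
      measureReal_def, measureReal_def, huniv]
  have bound (E : {E : Set α // MeasurableSet E}) :
      |(μ E.1).toReal - (ν E.1).toReal| ≤ ν.real s - μ.real s := by
    obtain ⟨E, hE⟩ := E
    have split_s (m : Measure α) [IsFiniteMeasure m] :
        m.real (E ∩ s) + m.real (E ∩ sᶜ) = m.real E := by
      rw [← sdiff_eq]; exact measureReal_inter_add_sdiff hs
    have split_E (m : Measure α) [IsFiniteMeasure m] (t : Set α) :
        m.real (E ∩ t) + m.real (Eᶜ ∩ t) = m.real t := by
      rw [inter_comm E, inter_comm Eᶜ, ← sdiff_eq]; exact measureReal_inter_add_sdiff hE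
    rw [← measureReal_def, ← measureReal_def, abs_le]
    constructor
    · linarith [split_s μ, split_s ν, split_E μ s, split_E ν s, le_on Eᶜ, ge_on E]
    · linarith [split_s μ, split_s ν, split_E μ sᶜ, split_E ν sᶜ, le_on E, ge_on Eᶜ]
  refine le_antisymm (ciSup_le bound) ?_
  refine le_ciSup_of_le ⟨_, forall_mem_range.mpr bound⟩ ⟨s, hs⟩ ?_
  rw [← measureReal_def, ← measureReal_def, ← neg_sub]
  exact neg_le_abs _

theorem HasStrictDerivAt.tendsto_sub_div {𝕜 ι : Type*} [NontriviallyNormedField 𝕜] {l : Filter ι}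
    {f : 𝕜 → 𝕜} {f' a L : 𝕜} (hf : HasStrictDerivAt f f' a) {u v w : ι → 𝕜}
    (hu : Tendsto u l (𝓝 a)) (hv : Tendsto v l (𝓝 a)) (hw : ∀ᶠ i in l, w i ≠ 0)
    (huv : Tendsto (fun i => (u i - v i) / w i) l (𝓝 L)) :
    Tendsto (fun i => (f (u i) - f (v i)) / w i) l (𝓝 (f' * L)) := by
  have hlin : (fun i => f (u i) - f (v i) - (u i - v i) * f') =o[l] (fun i => u i - v i) := by
    simpa [Function.comp_def, smul_eq_mul] using hf.isLittleO.comp_tendsto (hu.prodMk_nhds hv)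
  have hO : (fun i => u i - v i) =O[l] w :=
    Asymptotics.isBigO_of_div_tendsto_nhds (hw.mono fun i hi h => absurd h hi) L huv
  have herr := (hlin.trans_isBigO hO).tendsto_div_nhds_zero
  convert herr.add (huv.const_mul f') using 2 <;> ring

theorem gaussianReal_restrict_le {m₁ m₂ : ℝ} {v₁ v₂ : ℝ≥0} (hv₁ : v₁ ≠ 0) (hv₂ : v₂ ≠ 0)
    {s : Set ℝ} (hs : MeasurableSet s)
    (h : ∀ x ∈ s, gaussianPDFReal m₁ v₁ x ≤ gaussianPDFReal m₂ v₂ x) :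
    (gaussianReal m₁ v₁).restrict s ≤ (gaussianReal m₂ v₂).restrict s := by
  rw [gaussianReal_of_var_ne_zero _ hv₁, gaussianReal_of_var_ne_zero _ hv₂,
    restrict_withDensity hs, restrict_withDensity hs]
  exact withDensity_mono <| (ae_restrict_iff' hs).mpr <|
    Eventually.of_forall fun x hx => ENNReal.ofReal_le_ofReal (h x hx)

theorem gaussianPDFReal_zero_eq_exp {v : ℝ≥0} (hv : v ≠ 0) (x : ℝ) :
    gaussianPDFReal 0 v x = exp (-(x ^ 2 / (2 * v) + log (2 * π * v) / 2)) := by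
  have hpos : 0 < 2 * π * v := by positivity
  rw [gaussianPDFReal, sub_zero, neg_add, exp_add, mul_comm, neg_div, exp_neg (log _ / 2),
    ← log_sqrt hpos.le, exp_log (sqrt_pos.2 hpos)]

noncomputable def gaussianCrossing (s : ℝ) : ℝ := √((1 + s) * log (1 + s) / s)

theorem gaussianPDFReal_le_gaussianPDFReal_one_add_iff {s : ℝ} (hs : 0 < s) (x : ℝ) :
    gaussianPDFReal 0 1 x ≤ gaussianPDFReal 0 (1 + s).toNNReal x ↔ gaussianCrossing s ≤ |x| := by
  have hs1 : (0 : ℝ) < 1 + s := by linarith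
  have hv : (1 + s).toNNReal ≠ 0 := by simpa using hs1
  rw [gaussianPDFReal_zero_eq_exp one_ne_zero, gaussianPDFReal_zero_eq_exp hv, exp_le_exp,
    Real.coe_toNNReal _ hs1.le, NNReal.coe_one, mul_one, mul_one, log_mul (by positivity) hs1.ne',
    gaussianCrossing, ← sqrt_sq_eq_abs, sqrt_le_sqrt_iff (sq_nonneg x), div_le_iff₀ hs,
    ← mul_le_mul_iff_right₀ (by positivity : (0 : ℝ) < 2 * (1 + s))]
  have : 2 * (1 + s) * (x ^ 2 / 2 - x ^ 2 / (2 * (1 + s))) = x ^ 2 * s := by field_simp; ring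
  constructor <;> intro h <;> nlinarith

noncomputable def gaussianCentralMass (t : ℝ) : ℝ := ∫ x in -t..t, gaussianPDFReal 0 1 x

theorem gaussianReal_zero_one_real_Ioo {t : ℝ} (ht : 0 ≤ t) :
    (gaussianReal 0 1).real (Ioo (-t) t) = gaussianCentralMass t := by
  have hpos : 0 ≤ ∫ x in Ioo (-t) t, gaussianPDFReal 0 1 x :=
    setIntegral_nonneg measurableSet_Ioo fun x _ => gaussianPDFReal_nonneg _ _ x
  rw [measureReal_def, gaussianReal_apply_eq_integral 0 one_ne_zero, ENNReal.toReal_ofReal hpos,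
    gaussianCentralMass, intervalIntegral.integral_of_le (by linarith),
    integral_Ioc_eq_integral_Ioo]

theorem gaussianReal_zero_real_Ioo {v : ℝ≥0} (hv : v ≠ 0) {t : ℝ} (ht : 0 ≤ t) :
    (gaussianReal 0 v).real (Ioo (-t) t) = gaussianCentralMass (t / √v) := by
  have hsqrt : 0 < √(v : ℝ) := sqrt_pos.2 (by positivity)
  have hmap : (gaussianReal 0 1).map (√(v : ℝ) * ·) = gaussianReal 0 v := by
    rw [gaussianReal_map_const_mul, mul_zero, mul_one]
    congr 1
    exact NNReal.eq (by simp)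
  rw [← hmap, map_measureReal_apply (measurable_const_mul _) measurableSet_Ioo,
    preimage_const_mul_Ioo₀ _ _ hsqrt, neg_div, gaussianReal_zero_one_real_Ioo (by positivity)]

theorem hasStrictDerivAt_gaussianCentralMass (t : ℝ) :
    HasStrictDerivAt gaussianCentralMass (2 * gaussianPDFReal 0 1 t) t := by
  have hcont : Continuous (gaussianPDFReal 0 1) := by
    rw [gaussianPDFReal_def]; fun_prop
  have hG : gaussianCentralMass = fun t =>
      (∫ x in (0 : ℝ)..t, gaussianPDFReal 0 1 x) - ∫ x in (0 : ℝ)..(-t), gaussianPDFReal 0 1 x := by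
    ext t
    rw [intervalIntegral.integral_interval_sub_left (hcont.intervalIntegrable _ _)
      (hcont.intervalIntegrable _ _), gaussianCentralMass]
  have heven : gaussianPDFReal 0 1 (-t) = gaussianPDFReal 0 1 t := by
    simp [gaussianPDFReal]
  rw [hG, two_mul]
  exact ((hcont.integral_hasStrictDerivAt 0 t).sub
    ((hcont.integral_hasStrictDerivAt 0 (-t)).comp t (hasStrictDerivAt_neg t))).congr_deriv
    (by rw [heven]; ring)

theorem tendsto_sqrt_one_add : Tendsto (fun s : ℝ => √(1 + s)) (𝓝[>] 0) (𝓝 1) :=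
  tendsto_nhdsWithin_of_tendsto_nhds <| (continuous_const_add 1).sqrt.tendsto' 0 1 (by simp)

theorem tendsto_gaussianCrossing : Tendsto gaussianCrossing (𝓝[>] 0) (𝓝 1) := by
  have hlog : Tendsto (fun s : ℝ => s⁻¹ • (log (1 + s) - log 1)) (𝓝[>] 0) (𝓝 1⁻¹) :=
    (hasDerivAt_log one_ne_zero).tendsto_slope_zero_right
  have h := (tendsto_nhdsWithin_of_tendsto_nhds <|
    (continuous_const_add 1).tendsto' 0 1 (add_zero 1)).mul hlog
  rw [inv_one, mul_one] at h
  have h' := (continuous_sqrt.tendsto 1).comp h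
  rw [sqrt_one] at h'
  refine h'.congr fun s => ?_
  simp [gaussianCrossing, div_eq_inv_mul, mul_left_comm]

theorem tendsto_gaussianCrossing_sub_div :
    Tendsto (fun s => (gaussianCrossing s - gaussianCrossing s / √(1 + s)) / s) (𝓝[>] 0)
      (𝓝 (1 / 2)) := by
  have hsqrt : Tendsto (fun s : ℝ => s⁻¹ • (√(1 + s) - √1)) (𝓝[>] 0) (𝓝 (1 / (2 * √1))) :=
    (hasDerivAt_sqrt one_ne_zero).tendsto_slope_zero_right
  have h := (tendsto_gaussianCrossing.div tendsto_sqrt_one_add one_ne_zero).mul hsqrt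
  simp only [sqrt_one, div_one, one_mul, mul_one] at h
  refine h.congr' ?_
  filter_upwards [self_mem_nhdsWithin] with s (hs : 0 < s)
  have : √(1 + s) ≠ 0 := (sqrt_pos.2 (by linarith)).ne'
  simp only [Pi.div_apply, smul_eq_mul]
  field_simp

theorem gaussianPDFReal_zero_one_one : gaussianPDFReal 0 1 1 = (√(2 * exp 1 * π))⁻¹ := by
  have hexp : √(exp 1) = exp (1 / 2) := by
    rw [← exp_log (sqrt_pos.2 (exp_pos 1)), log_sqrt (exp_pos 1).le, log_exp]
  rw [gaussianPDFReal, show 2 * exp 1 * π = 2 * π * exp 1 by ring, sqrt_mul' _ (exp_pos 1).le, hexp,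
    mul_inv, ← exp_neg]
  norm_num

theorem tvDist_gaussianReal_one_add {s : ℝ} (hs : 0 < s) :
    tvDist (gaussianReal 0 (1 + s).toNNReal) (gaussianReal 0 1) =
      gaussianCentralMass (gaussianCrossing s) -
        gaussianCentralMass (gaussianCrossing s / √(1 + s)) := by
  have hs1 : (0 : ℝ) < 1 + s := by linarith
  have hv : (1 + s).toNNReal ≠ 0 := by simpa using hs1
  set c := gaussianCrossing s
  have hc : 0 ≤ c := sqrt_nonneg _
  rw [tvDist_eq_measureReal_sub (by simp) measurableSet_Ioo, gaussianReal_zero_one_real_Ioo hc,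
    gaussianReal_zero_real_Ioo hv hc, Real.coe_toNNReal _ hs1.le]
  · exact gaussianReal_restrict_le hv one_ne_zero measurableSet_Ioo fun x hx =>
      le_of_not_ge <| (gaussianPDFReal_le_gaussianPDFReal_one_add_iff hs x).not.mpr
        (abs_lt.mpr hx).not_ge
  · exact gaussianReal_restrict_le one_ne_zero hv measurableSet_Ioo.compl fun x hx =>
      (gaussianPDFReal_le_gaussianPDFReal_one_add_iff hs x).mpr <|
        not_lt.mp fun h => hx (abs_lt.mp h)

/-- As `s → 0⁺`, `‖N(0,1+s) − N(0,1)‖_TV = s/√(2eπ)·(1+o(1))`. -/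
theorem stmt_3 :
    Tendsto (fun s : ℝ =>
        tvDist (gaussianReal 0 (Real.toNNReal (1 + s))) (gaussianReal 0 1)
          / (s / Real.sqrt (2 * Real.exp 1 * Real.pi)))
      (nhdsWithin 0 (Set.Ioi 0)) (nhds 1) := by
  have hd : Tendsto (fun s => gaussianCrossing s / √(1 + s)) (𝓝[>] 0) (𝓝 1) := by
    have := tendsto_gaussianCrossing.div tendsto_sqrt_one_add one_ne_zero
    rwa [div_one] at this
  have h := (hasStrictDerivAt_gaussianCentralMass 1).tendsto_sub_div tendsto_gaussianCrossing hd
    (eventually_mem_nhdsWithin.mono fun s (hs : 0 < s) => hs.ne') tendsto_gaussianCrossing_sub_div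
  have hK : 0 < √(2 * exp 1 * π) := by positivity
  rw [gaussianPDFReal_zero_one_one] at h
  replace h := h.mul_const √(2 * exp 1 * π)
  rw [show 2 * (√(2 * exp 1 * π))⁻¹ * (1 / 2) * √(2 * exp 1 * π) = 1 by field_simp] at h
  refine h.congr' ?_
  filter_upwards [self_mem_nhdsWithin] with s (hs : 0 < s)
  rw [tvDist_gaussianReal_one_add hs, div_div_eq_mul_div, mul_div_right_comm]
end

section
/- Let q(1),…,q(n) be real numbers and let σ_1,…,σ_n be i.i.d. uniform on {−1,1} under π. Set h(σ) := Π_{i=1}^n (1 + σ_i q(i)). Then ∫ (h − Σ_i σ_i q(i))² dπ − 1 = Π_{i=1}^n (1 + q(i)²) − Σ_i q(i)² − 1 ≤ e^{⟨q,q⟩} − ⟨q,q⟩ − 1, where ⟨q,q⟩ = Σ_i q(i)². -/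
/-! Under the uniform measure on `{-1, 1}^ι` the coordinates are independent, so the average of
a product `∏ i, f i (σ i)` factors as `∏ i, (f i (-1) + f i 1) / 2`. This gives `𝔼[h²] = ∏ (1 + q i²)`
and `𝔼[h σ_j] q_j = q_j²`, while `𝔼[σ_j σ_k] = δ_jk`; expanding the square yields the identity.
The inequality is `1 + x ≤ eˣ` applied factorwise. -/

open MeasureTheory

instance : Nonempty ({-1, 1} : Set ℝ) := ⟨⟨1, by simp⟩⟩

open Finset

lemma PMF.integral_uniformOfFintype {α : Type*} [Fintype α] [Nonempty α] [MeasurableSpace α]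
    [MeasurableSingletonClass α] (f : α → ℝ) :
    ∫ a, f a ∂(PMF.uniformOfFintype α).toMeasure = (Fintype.card α : ℝ)⁻¹ * ∑ a, f a := by
  simp [PMF.integral_eq_sum, Finset.mul_sum]

namespace SignCube

lemma sum_sign (g : ℝ → ℝ) : ∑ x : ({-1, 1} : Set ℝ), g x = g (-1) + g 1 := by
  rw [Finset.sum_set_coe (f := g), Set.toFinset_insert, Set.toFinset_singleton,
    sum_pair (by norm_num)]

lemma card_sign : Fintype.card ({-1, 1} : Set ℝ) = 2 := by
  have := sum_sign (fun _ => 1)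
  simp only [sum_const, card_univ, nsmul_eq_mul, mul_one] at this
  exact_mod_cast this.trans one_add_one_eq_two

lemma sign_mul_self (x : ({-1, 1} : Set ℝ)) : (x : ℝ) * x = 1 := by
  rcases x.2 with h | h <;> rw [h] <;> norm_num

variable {ι : Type*} [Fintype ι] [DecidableEq ι]

lemma card_sign_pi : Fintype.card (ι → ({-1, 1} : Set ℝ)) = 2 ^ Fintype.card ι := by
  rw [Fintype.card_fun, card_sign]

lemma sum_prod_sign (f : ι → ℝ → ℝ) :
    ∑ σ : ι → ({-1, 1} : Set ℝ), ∏ i, f i (σ i) = ∏ i, (f i (-1) + f i 1) := by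
  simp only [← sum_sign, Fintype.prod_sum]

lemma sum_prod_sign_of_eq_two_mul (f : ι → ℝ → ℝ) (a : ι → ℝ)
    (h : ∀ i, f i (-1) + f i 1 = 2 * a i) :
    ∑ σ : ι → ({-1, 1} : Set ℝ), ∏ i, f i (σ i) = 2 ^ Fintype.card ι * ∏ i, a i := by
  rw [sum_prod_sign, prod_congr rfl fun i _ => h i, prod_mul_distrib, prod_const, card_univ]

variable (q : ι → ℝ)

lemma sum_prod_one_add_mul_sq :
    ∑ σ : ι → ({-1, 1} : Set ℝ), (∏ i, (1 + σ i * q i)) ^ 2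
      = 2 ^ Fintype.card ι * ∏ i, (1 + q i ^ 2) := by
  simp only [← prod_pow]
  exact sum_prod_sign_of_eq_two_mul (fun i x => (1 + x * q i) ^ 2) _ fun i => by ring

lemma sum_prod_one_add_mul_mul_coord (j : ι) :
    ∑ σ : ι → ({-1, 1} : Set ℝ), (∏ i, (1 + σ i * q i)) * (σ j * q j)
      = 2 ^ Fintype.card ι * q j ^ 2 := by
  have hprod (σ : ι → ({-1, 1} : Set ℝ)) : (∏ i, (1 + σ i * q i)) * (σ j * q j)
      = ∏ i, (1 + σ i * q i) * (if i = j then σ i * q i else 1) := by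
    rw [prod_mul_distrib, Fintype.prod_ite_eq']
  simp only [hprod]
  rw [sum_prod_sign_of_eq_two_mul (fun i x => (1 + x * q i) * if i = j then x * q i else 1)
      (fun i => if i = j then q i ^ 2 else 1),
    Fintype.prod_ite_eq']
  intro i
  split_ifs <;> ring

lemma sum_coord_mul_coord (j k : ι) :
    ∑ σ : ι → ({-1, 1} : Set ℝ), (σ j : ℝ) * σ k = if j = k then 2 ^ Fintype.card ι else 0 := by
  split_ifs with hjk
  · subst hjk
    simp only [sign_mul_self, sum_const, card_univ, card_sign_pi, nsmul_eq_mul, mul_one]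
    norm_num
  · have hprod (σ : ι → ({-1, 1} : Set ℝ)) :
        (σ j : ℝ) * σ k = ∏ i, if i ∈ ({j, k} : Finset ι) then (σ i : ℝ) else 1 := by
      rw [Fintype.prod_ite_mem, prod_pair hjk]
    simp only [hprod]
    rw [sum_prod_sign (fun i x => if i ∈ ({j, k} : Finset ι) then x else 1)]
    exact prod_eq_zero (mem_univ j) (by simp)

lemma sum_linear_sq :
    ∑ σ : ι → ({-1, 1} : Set ℝ), (∑ i, σ i * q i) ^ 2 = 2 ^ Fintype.card ι * ∑ i, q i ^ 2 := by
  have hexp (σ : ι → ({-1, 1} : Set ℝ)) :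
      (∑ i, σ i * q i) ^ 2 = ∑ j, ∑ k, (σ j : ℝ) * σ k * (q j * q k) := by
    rw [sq, sum_mul_sum]
    exact sum_congr rfl fun j _ => sum_congr rfl fun k _ => by ring
  simp only [hexp]
  rw [sum_comm]
  calc ∑ j, ∑ σ : ι → ({-1, 1} : Set ℝ), ∑ k, (σ j : ℝ) * σ k * (q j * q k)
      = ∑ j, ∑ k, (∑ σ : ι → ({-1, 1} : Set ℝ), (σ j : ℝ) * σ k) * (q j * q k) := by
        refine sum_congr rfl fun j _ => ?_
        rw [sum_comm]
        simp only [sum_mul]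
    _ = 2 ^ Fintype.card ι * ∑ i, q i ^ 2 := by
        simp [sum_coord_mul_coord, mul_sum, sq]

lemma sum_prod_one_add_mul_mul_linear :
    ∑ σ : ι → ({-1, 1} : Set ℝ), (∏ i, (1 + σ i * q i)) * ∑ j, σ j * q j
      = 2 ^ Fintype.card ι * ∑ j, q j ^ 2 := by
  simp only [mul_sum]
  rw [sum_comm]
  simp only [sum_prod_one_add_mul_mul_coord]

lemma sum_prod_sub_linear_sq :
    ∑ σ : ι → ({-1, 1} : Set ℝ), ((∏ i, (1 + σ i * q i)) - ∑ i, σ i * q i) ^ 2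
      = 2 ^ Fintype.card ι * ((∏ i, (1 + q i ^ 2)) - ∑ i, q i ^ 2) := by
  simp only [sub_sq, sum_add_distrib, sum_sub_distrib, mul_assoc, ← mul_sum,
    sum_prod_one_add_mul_sq, sum_prod_one_add_mul_mul_linear, sum_linear_sq]
  ring

end SignCube

/-- With `π` uniform on `{−1,1}^n` and `h(σ) = Π_i (1+σ_i q(i))`, one has
`∫(h − Σ_i σ_i q(i))² dπ − 1 = Π_i(1+q(i)²) − Σ_i q(i)² − 1 ≤ e^{⟨q,q⟩} − ⟨q,q⟩ − 1`. -/
theorem stmt_11 (n : ℕ) (q : Fin n → ℝ) :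
    (∫ σ, ((∏ i, (1 + (σ i : ℝ) * q i)) - ∑ i, (σ i : ℝ) * q i) ^ 2
        ∂((PMF.uniformOfFintype (Fin n → ({-1, 1} : Set ℝ))).toMeasure) - 1
      = (∏ i, (1 + q i ^ 2)) - (∑ i, q i ^ 2) - 1)
    ∧ (∏ i, (1 + q i ^ 2)) - (∑ i, q i ^ 2) - 1
      ≤ Real.exp (∑ i, q i ^ 2) - (∑ i, q i ^ 2) - 1 := by
  constructor
  · rw [PMF.integral_uniformOfFintype, SignCube.sum_prod_sub_linear_sq q,
      SignCube.card_sign_pi, Fintype.card_fin]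
    push_cast
    rw [inv_mul_cancel_left₀ (by positivity)]
  · linarith [Real.prod_one_add_le_exp_sum Finset.univ fun i => sq_nonneg (q i)]
end
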